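/- Let X be a uniform space, μ a bounded linear functional on U_b(X) represented by integration against a finite nonnegative countably additive measure m on σ(Coz(X)), and suppose X is a uniform D-space. Then for every ε > 0, every uniformly continuous pseudometric d on X, and every pointwise nonincreasing net (g_α) in Lip(d) of nonnegative functions converging pointwise to 0, we have limsup_α μ(g_α) ≤ ε·m(X). In particular lim_α μ(g_α) = 0. -/

import Mathlib

open Filter MeasureTheory Topology Set

/-- `d` is a pseudometric on `X`. -/
def IsPseudometric {X : Type*} (d : X → X → ℝ) : Prop :=
  (∀ x, d x x = 0) ∧ (∀ x y, d x y = d y x) ∧ (∀ x y, 0 ≤ d x y) ∧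
    ∀ x y z, d x z ≤ d x y + d y z

/-- `Lip d`: functions bounded by 1 that are 1-Lipschitz for `d`. -/
def Lip {X : Type*} (d : X → X → ℝ) : Set (X → ℝ) :=
  {f | (∀ x, |f x| ≤ 1) ∧ ∀ x x', |f x - f x'| ≤ d x x'}

/-- `U` is open in the (possibly non-Hausdorff) topology induced by the pseudometric `d`. -/
def DOpen {X : Type*} (d : X → X → ℝ) (U : Set X) : Prop :=
  ∀ x ∈ U, ∃ ε > 0, ∀ y, d x y < ε → y ∈ U

/-- `U` is a cozero set of a bounded uniformly continuous real function on `X`. -/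
def IsCozero (X : Type*) [UniformSpace X] (U : Set X) : Prop :=
  ∃ f : X → ℝ, UniformContinuous f ∧ (∃ C, ∀ x, |f x| ≤ C) ∧ U = {x | f x ≠ 0}

/-- The σ-algebra generated by the cozero sets of `X`. -/
def cozMS (X : Type*) [UniformSpace X] : MeasurableSpace X :=
  MeasurableSpace.generateFrom {U | IsCozero X U}

/-- The pseudometric topology of `d` is separable. -/
def DSeparable {X : Type*} (d : X → X → ℝ) : Prop :=
  ∃ D : Set X, D.Countable ∧ ∀ x : X, ∀ ε : ℝ, 0 < ε → ∃ p ∈ D, d x p < ε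

/-- The cardinality of `A` has measure zero: every finite nonnegative countably additive
measure on the power set of `A` vanishing on singletons is zero. -/
def HasMeasureZero (A : Type*) : Prop :=
  ∀ m : @MeasureTheory.Measure A ⊤, @MeasureTheory.IsFiniteMeasure A ⊤ m →
    (∀ a : A, m {a} = 0) → m Set.univ = 0

/-- `Y` is a uniformly discrete subset of the uniform space `X`. -/
def UniformlyDiscrete {X : Type*} [UniformSpace X] (Y : Set X) : Prop :=
  ∃ d : X → X → ℝ, IsPseudometric d ∧ (UniformContinuous fun p : X × X => d p.1 p.2) ∧
    ∃ ε > 0, ∀ y ∈ Y, ∀ y' ∈ Y, y ≠ y' → ε ≤ d y y'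

/-- `X` is a uniform D-space. -/
def IsDSpace (X : Type*) [UniformSpace X] : Prop :=
  ∀ Y : Set X, UniformlyDiscrete Y → HasMeasureZero Y

/-- Distance from a point to a set. -/
noncomputable def distSet {X : Type*} (d : X → X → ℝ) (S : Set X) (x : X) : ℝ :=
  sInf ((d x) '' S)

/-- `fS d S x = min 1 (d(x,S))`, with the convention `fS d ∅ = 1`. -/
noncomputable def fS {X : Type*} (d : X → X → ℝ) (S : Set X) (x : X) : ℝ :=
  @ite _ S.Nonempty (Classical.propDecidable _) (min 1 (distSet d S x)) 1

/-! A finite measure `m` on the cozero σ-algebra of a uniform D-space is, for every `ρ > 0`,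
carried up to a null set by the `ρ`-neighbourhood of a countable set. Indeed, take a maximal
`ρ`-separated set `Y` and refine the cover by the `ρ`-balls around `Y` (Stone's
construction) into countably many families `(V n a)_{a ∈ Y}` of uniformly separated sets. For
such a family, with disjoint open neighbourhoods `N a`, the map `B ↦ m (⋃ a ∈ B, N a)` is a
finite measure on the power set of `Y`; since `Y` is uniformly discrete, its cardinal has
measure zero, so this measure is carried by the countably many `a` with `m (N a) > 0`.

Given such a countable `D`, the net `g` is eventually `< η` on any finite `F ⊆ D`, hence,
being `1`-Lipschitz, `≤ ρ + η` on the `ρ`-neighbourhood of `F`; for suitable `F` the complement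
of this neighbourhood has measure `< η`, and `g ≤ 1` there. Since the integrals decrease, they
tend to `0`.
-/

open Function
open scoped Uniformity ENNReal

namespace IsPseudometric

variable {X : Type*} {d : X → X → ℝ}

theorem refl (hd : IsPseudometric d) (x : X) : d x x = 0 := hd.1 x

theorem symm (hd : IsPseudometric d) (x y : X) : d x y = d y x := hd.2.1 x y

theorem nonneg (hd : IsPseudometric d) (x y : X) : 0 ≤ d x y := hd.2.2.1 x y

theorem triangle (hd : IsPseudometric d) (x y z : X) : d x z ≤ d x y + d y z := hd.2.2.2 x y z

end IsPseudometric

section DistSet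

variable {X : Type*} {d : X → X → ℝ} {S : Set X}

theorem distSet_le_of_mem (hd : IsPseudometric d) {v : X} (hv : v ∈ S) (x : X) :
    distSet d S x ≤ d x v :=
  csInf_le ⟨0, by rintro _ ⟨w, -, rfl⟩; exact hd.nonneg x w⟩ ⟨v, hv, rfl⟩

theorem le_distSet_of_forall_le {x : X} {t : ℝ} (hS : S.Nonempty)
    (h : ∀ v ∈ S, t ≤ d x v) : t ≤ distSet d S x :=
  le_csInf (hS.image _) (by rintro _ ⟨v, hv, rfl⟩; exact h v hv)

theorem distSet_le_add (hd : IsPseudometric d) (hS : S.Nonempty) (x y : X) :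
    distSet d S x ≤ d x y + distSet d S y := by
  have : distSet d S x - d x y ≤ distSet d S y := le_distSet_of_forall_le hS fun v hv => by
    linarith [distSet_le_of_mem hd hv x, hd.triangle x y v]
  linarith

theorem abs_distSet_sub_le (hd : IsPseudometric d) (hS : S.Nonempty) (x y : X) :
    |distSet d S x - distSet d S y| ≤ d x y := by
  rw [abs_sub_le_iff]
  constructor
  · linarith [distSet_le_add hd hS x y]
  · linarith [distSet_le_add hd hS y x, hd.symm y x]

end DistSet

section DOpen

variable {X : Type*} {d : X → X → ℝ}

theorem DOpen.biUnion {κ : Type*} {U : κ → Set X} {B : Set κ}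
    (hU : ∀ a ∈ B, DOpen d (U a)) : DOpen d (⋃ a ∈ B, U a) := by
  intro x hx
  obtain ⟨a, ha, hxa⟩ := mem_iUnion₂.1 hx
  obtain ⟨ε, hε, hball⟩ := hU a ha x hxa
  exact ⟨ε, hε, fun y hy => mem_biUnion ha (hball y hy)⟩

theorem dOpen_thickening (hd : IsPseudometric d) (S : Set X) (r : ℝ) :
    DOpen d {x | ∃ v ∈ S, d x v < r} := by
  rintro x ⟨v, hv, hxv⟩
  refine ⟨r - d x v, by linarith, fun y hy => ⟨v, hv, ?_⟩⟩
  linarith [hd.triangle y x v, hd.symm y x]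

theorem dOpen_lt_of_lipschitz {f : X → ℝ}
    (hf : ∀ x y, |f x - f y| ≤ d x y) (a : ℝ) : DOpen d {x | a < f x} := by
  intro x hx
  refine ⟨f x - a, by simpa using hx, fun y hy => ?_⟩
  have := (abs_le.1 (hf x y)).2
  show a < f y
  linarith

theorem measurable_of_lipschitz [MeasurableSpace X]
    (hopen : ∀ U, DOpen d U → MeasurableSet U) {f : X → ℝ}
    (hf : ∀ x y, |f x - f y| ≤ d x y) : Measurable f :=
  measurable_of_Ioi fun a => hopen _ (dOpen_lt_of_lipschitz hf a)

theorem integrable_of_mem_Lip [MeasurableSpace X] (hopen : ∀ U, DOpen d U → MeasurableSet U)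
    {m : Measure X} [IsFiniteMeasure m] {f : X → ℝ} (hf : f ∈ Lip d) : Integrable f m :=
  .of_bound (measurable_of_lipschitz hopen hf.2).aestronglyMeasurable 1 (ae_of_all _ hf.1)

end DOpen

section Cozero

variable {X : Type*} [UniformSpace X] {d : X → X → ℝ}

theorem tendsto_uniformity_pseudometric (hd : IsPseudometric d)
    (hdu : UniformContinuous fun p : X × X => d p.1 p.2) :
    Tendsto (fun q : X × X => d q.1 q.2) (𝓤 X) (𝓝 0) := by
  have hpair : Tendsto (fun q : X × X => ((q.1, q.1), q)) (𝓤 X) (𝓤 (X × X)) := by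
    rw [uniformity_prod_eq_prod]
    exact tendsto_map.comp ((tendsto_diag_uniformity Prod.fst _).prodMk tendsto_id)
  have := tendsto_uniformity_iff_dist_tendsto_zero.1 (Tendsto.comp hdu hpair)
  simpa [Function.comp_def, hd.refl, Real.dist_eq, abs_of_nonneg (hd.nonneg _ _)] using this

theorem uniformContinuous_of_lipschitz (hd : IsPseudometric d)
    (hdu : UniformContinuous fun p : X × X => d p.1 p.2) {f : X → ℝ}
    (hf : ∀ x y, |f x - f y| ≤ d x y) : UniformContinuous f := by
  refine tendsto_uniformity_iff_dist_tendsto_zero.2 <|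
    squeeze_zero (fun _ => dist_nonneg) (fun q => ?_) (tendsto_uniformity_pseudometric hd hdu)
  exact (Real.dist_eq _ _).trans_le (hf q.1 q.2)

theorem measurable_cozMS_of_uniformContinuous {f : X → ℝ} (hf : UniformContinuous f) :
    Measurable[cozMS X] f := by
  let := cozMS X
  refine measurable_of_Ioi fun a => MeasurableSpace.measurableSet_generateFrom
    ⟨fun x => min (max (f x - a) 0) 1, ?_, ⟨1, fun x => ?_⟩, ?_⟩
  · exact ((LipschitzWith.id.max_const 0).min_const 1).uniformContinuous.comp
      (hf.sub uniformContinuous_const)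
  · rw [abs_le]
    exact ⟨by linarith [le_min (le_max_right (f x - a) 0) zero_le_one], min_le_right _ _⟩
  · ext x
    refine ⟨fun hx => (lt_min (lt_max_of_lt_left (sub_pos.2 hx)) one_pos).ne', fun hx => ?_⟩
    by_contra hle
    exact hx (by simp [sub_nonpos.2 (not_lt.1 (show ¬ a < f x from hle))])

theorem DOpen.measurableSet_cozMS (hd : IsPseudometric d)
    (hdu : UniformContinuous fun p : X × X => d p.1 p.2) {U : Set X} (hU : DOpen d U) :
    MeasurableSet[cozMS X] U := by
  rcases (Uᶜ).eq_empty_or_nonempty with hc | hc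
  · rw [compl_empty_iff.1 hc]; exact @MeasurableSet.univ _ (cozMS X)
  have hmeas := measurable_cozMS_of_uniformContinuous
    (uniformContinuous_of_lipschitz hd hdu (abs_distSet_sub_le hd hc))
  convert hmeas measurableSet_Ioi
  ext x
  refine ⟨fun hx => ?_, fun hx => ?_⟩
  · obtain ⟨ε, hε, hball⟩ := hU x hx
    exact hε.trans_le <| le_distSet_of_forall_le hc fun v hv => not_lt.1 fun h => hv (hball v h)
  · by_contra hxU
    have := distSet_le_of_mem hd (show x ∈ Uᶜ from hxU) x
    rw [hd.refl] at this
    exact (not_lt.2 this) hx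

end Cozero

theorem HasMeasureZero.exists_countable_measure_biUnion_eq_zero {κ : Type*}
    (hκ : HasMeasureZero κ) {X : Type*} [MeasurableSpace X] (m : Measure X) [IsFiniteMeasure m]
    {N : κ → Set X} (hN : Pairwise (Disjoint on N))
    (hmeas : ∀ B : Set κ, MeasurableSet (⋃ a ∈ B, N a)) :
    ∃ C : Set κ, C.Countable ∧ m (⋃ a ∈ Cᶜ, N a) = 0 := by
  let _ : MeasurableSpace κ := ⊤
  have hdisj : ∀ B B' : Set κ, Disjoint B B' → Disjoint (⋃ a ∈ B, N a) (⋃ a ∈ B', N a) :=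
    fun B B' h => disjoint_iUnion₂_left.2 fun a ha => disjoint_iUnion₂_right.2 fun b hb =>
      hN (h.ne_of_mem ha hb)
  let μ : Measure κ := Measure.ofMeasurable (fun B _ => m (⋃ a ∈ B, N a)) (by simp)
    fun f _ hf => by
      rw [biUnion_iUnion]
      exact measure_iUnion (fun i j hij => hdisj _ _ (hf hij)) fun i => hmeas _
  have hμ : ∀ B, μ B = m (⋃ a ∈ B, N a) := fun B => Measure.ofMeasurable_apply B trivial
  have : IsFiniteMeasure μ := ⟨by rw [hμ]; exact measure_lt_top _ _⟩
  have hNmeas : ∀ a, MeasurableSet (N a) := fun a => by simpa using hmeas {a}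
  set C := {a | 0 < m (N a)}
  refine ⟨C, Measure.countable_meas_pos_of_disjoint_iUnion hNmeas hN, ?_⟩
  have hsingleton : ∀ a, μ.restrict Cᶜ {a} = 0 := fun a => by
    rw [Measure.restrict_apply MeasurableSpace.measurableSet_top, hμ]
    by_cases ha : a ∈ C
    · simp [ha]
    · simpa [ha] using (show ¬ 0 < m (N a) from ha)
  simpa [hμ] using hκ (μ.restrict Cᶜ) inferInstance hsingleton

def IsSeparatedFamily {X κ : Type*} (d : X → X → ℝ) (s : ℝ) (W : κ → Set X) : Prop :=
  Pairwise fun a b => ∀ v ∈ W a, ∀ v' ∈ W b, s ≤ d v v'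

section Separated

variable {X : Type*} {d : X → X → ℝ}

theorem IsSeparatedFamily.exists_countable_measure_biUnion_eq_zero [MeasurableSpace X]
    (hd : IsPseudometric d) (hopen : ∀ U, DOpen d U → MeasurableSet U) (m : Measure X)
    [IsFiniteMeasure m] {κ : Type*} (hκ : HasMeasureZero κ) {W : κ → Set X} {s : ℝ}
    (hs : 0 < s) (hW : IsSeparatedFamily d s W) :
    ∃ C : Set κ, C.Countable ∧ m (⋃ a ∈ Cᶜ, W a) = 0 := by
  set N : κ → Set X := fun a => {x | ∃ v ∈ W a, d x v < s / 2}
  have hN : Pairwise (Disjoint on N) := fun a b hab =>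
    disjoint_left.2 fun x ⟨v, hv, hxv⟩ ⟨v', hv', hxv'⟩ => by
      linarith [hW hab v hv v' hv', hd.triangle v x v', hd.symm v x]
  obtain ⟨C, hC, hnull⟩ := hκ.exists_countable_measure_biUnion_eq_zero m hN
    fun B => hopen _ (DOpen.biUnion fun a _ => dOpen_thickening hd _ _)
  refine ⟨C, hC, measure_mono_null (biUnion_mono subset_rfl fun a _ v hv => ?_) hnull⟩
  exact ⟨v, hv, by rw [hd.refl]; positivity⟩

theorem exists_separated_net (hd : IsPseudometric d) {δ : ℝ} (hδ : 0 < δ) :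
    ∃ Y : Set X, Y.Pairwise (fun y y' => δ ≤ d y y') ∧ ∀ x, ∃ y ∈ Y, d x y < δ := by
  obtain ⟨Y, hYsep, hYmax⟩ := zorn_subset {Y : Set X | Y.Pairwise fun y y' => δ ≤ d y y'}
    fun c hc hchain => ⟨⋃₀ c, (pairwise_sUnion hchain.directedOn).2 fun Y hY => hc hY,
      fun Y hY => subset_sUnion_of_mem hY⟩
  refine ⟨Y, hYsep, fun x => ?_⟩
  by_contra! hfar
  have hins : (insert x Y).Pairwise fun y y' => δ ≤ d y y' :=
    pairwise_insert.2 ⟨hYsep, fun y hy _ => ⟨hfar y hy, hd.symm y x ▸ hfar y hy⟩⟩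
  have := hfar x (hYmax hins (subset_insert x Y) (mem_insert x Y))
  linarith [hd.refl x]

/-- Stone's σ-discrete refinement of the cover by the balls of radius `δ` around `p a`: a point
lies in `V n a` when `a` is the first index whose ball contains it, with margin `2 / (n + 1)`. -/
theorem exists_separatedFamily_refinement (hd : IsPseudometric d) {κ : Type*}
    (r : κ → κ → Prop) [IsWellOrder κ r] (p : κ → X) {δ : ℝ}
    (hcover : ∀ x, ∃ a, d x (p a) < δ) :
    ∃ V : ℕ → κ → Set X, (∀ n a, ∀ x ∈ V n a, d x (p a) < δ) ∧ (∀ x, ∃ n a, x ∈ V n a) ∧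
      ∀ n : ℕ, IsSeparatedFamily d (1 / (n + 1)) (V n) := by
  let V : ℕ → κ → Set X := fun n a => {x | d x (p a) < δ - 2 * (1 / (n + 1)) ∧
    ∀ b, r b a → δ - 1 / (n + 1) ≤ d x (p b)}
  refine ⟨V, fun n a x hx => ?_, fun x => ?_, fun n => ?_⟩
  · have : (0 : ℝ) < 1 / (n + 1) := by positivity
    linarith [hx.1]
  · have hwf := IsWellFounded.wf (r := r)
    let a := hwf.min {a | d x (p a) < δ} (hcover x)
    have ha : d x (p a) < δ := hwf.min_mem _ (hcover x)
    obtain ⟨n, hn⟩ := exists_nat_one_div_lt (half_pos (sub_pos.2 ha))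
    refine ⟨n, a, by linarith, fun b hba => ?_⟩
    have : δ ≤ d x (p b) := not_lt.1 fun hb => hwf.not_lt_min _ hb hba
    linarith [show (0 : ℝ) < 1 / (n + 1) by positivity]
  · have hsep : ∀ a b, r a b → ∀ v ∈ V n a, ∀ v' ∈ V n b, 1 / ((n : ℝ) + 1) ≤ d v v' :=
      fun a b hab v hv v' hv' => by
        linarith [hv.1, hv'.2 a hab, hd.triangle v' v (p a), hd.symm v' v]
    intro a b hab v hv v' hv'
    rcases trichotomous_of r a b with h | h | h
    · exact hsep a b h v hv v' hv'
    · exact absurd h hab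
    · exact hd.symm v' v ▸ hsep b a h v' hv' v hv

theorem IsDSpace.exists_countable_ae_near [UniformSpace X] [MeasurableSpace X]
    (hD : IsDSpace X) (hd : IsPseudometric d)
    (hdu : UniformContinuous fun p : X × X => d p.1 p.2)
    (hopen : ∀ U, DOpen d U → MeasurableSet U) (m : Measure X) [IsFiniteMeasure m] {ρ : ℝ}
    (hρ : 0 < ρ) : ∃ D : Set X, D.Countable ∧ ∀ᵐ x ∂m, ∃ p ∈ D, d x p < ρ := by
  obtain ⟨Y, hYsep, hYcover⟩ := exists_separated_net hd hρ
  have hY : HasMeasureZero Y := hD Y ⟨d, hd, hdu, ρ, hρ, fun y hy y' hy' h => hYsep hy hy' h⟩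
  obtain ⟨V, hVnear, hVcover, hVsep⟩ := exists_separatedFamily_refinement hd WellOrderingRel
    (Subtype.val : Y → X) fun x => let ⟨y, hy, hxy⟩ := hYcover x; ⟨⟨y, hy⟩, hxy⟩
  choose C hC hnull using fun n : ℕ =>
    (hVsep n).exists_countable_measure_biUnion_eq_zero hd hopen m hY (by positivity)
  refine ⟨⋃ n, Subtype.val '' C n, countable_iUnion fun n => (hC n).image _, ?_⟩
  refine measure_mono_null (fun x hx => ?_) (measure_iUnion_null hnull)
  obtain ⟨n, a, hxa⟩ := hVcover x
  by_cases ha : a ∈ C n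
  · exact absurd ⟨a, mem_iUnion.2 ⟨n, mem_image_of_mem _ ha⟩, hVnear n a x hxa⟩ hx
  · exact mem_iUnion.2 ⟨n, mem_biUnion ha hxa⟩

end Separated

theorem exists_finset_measure_compl_biUnion_lt {α ι : Type*} [Countable ι]
    [MeasurableSpace α] {μ : Measure α} [IsFiniteMeasure μ] {s : ι → Set α}
    (hs : ∀ i, MeasurableSet (s i)) (hcover : ∀ᵐ x ∂μ, ∃ i, x ∈ s i) {η : ℝ≥0∞} (hη : 0 < η) :
    ∃ F : Finset ι, μ (⋃ i ∈ F, s i)ᶜ < η := by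
  have hlim : Tendsto (fun F : Finset ι => μ (⋃ i ∈ F, s i)ᶜ) atTop
      (𝓝 (μ (⋂ F : Finset ι, (⋃ i ∈ F, s i)ᶜ))) :=
    tendsto_measure_iInter_atTop
      (fun F => (F.measurableSet_biUnion fun i _ => hs i).compl.nullMeasurableSet)
      (fun F F' h => compl_subset_compl.2 (biUnion_subset_biUnion_left h)) ⟨∅, measure_ne_top _ _⟩
  have hzero : μ (⋂ F : Finset ι, (⋃ i ∈ F, s i)ᶜ) = 0 := by
    rw [← compl_iUnion, ← iUnion_eq_iUnion_finset]
    exact ae_iff.1 (hcover.mono fun x hx => mem_iUnion.2 hx)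
  rw [hzero] at hlim
  exact ((tendsto_order.1 hlim).2 η hη).exists

section Net

variable {X : Type*} [MeasurableSpace X] {d : X → X → ℝ}

theorem exists_integral_le_of_ae_near (hd : IsPseudometric d)
    (hopen : ∀ U, DOpen d U → MeasurableSet U) {m : Measure X} [IsFiniteMeasure m]
    {D : Set X} (hD : D.Countable) {ε : ℝ} (hε : 0 ≤ ε)
    (hnear : ∀ᵐ x ∂m, ∃ p ∈ D, d x p < ε)
    {ι : Type*} {l : Filter ι} [l.NeBot] {g : ι → X → ℝ} (hg : ∀ i, g i ∈ Lip d)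
    (h0 : ∀ x, Tendsto (fun i => g i x) l (𝓝 0)) {η : ℝ} (hη : 0 < η) :
    ∃ i, ∫ x, g i x ∂m ≤ (ε + η) * m.real univ + η := by
  have := hD.to_subtype
  have hball : ∀ p : D, MeasurableSet {x | d x p < ε} :=
    fun p => hopen _ (by simpa using dOpen_thickening hd {(p : X)} ε)
  obtain ⟨F, hF⟩ := exists_finset_measure_compl_biUnion_lt hball
    (by filter_upwards [hnear] with x ⟨p, hp, hxp⟩ using ⟨⟨p, hp⟩, hxp⟩)
    (ENNReal.ofReal_pos.2 hη)
  set T := ⋃ p ∈ F, {x | d x p < ε}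
  have hT : MeasurableSet T := F.measurableSet_biUnion fun p _ => hball p
  obtain ⟨i, hi⟩ : ∃ i, ∀ p ∈ F, g i p < η :=
    ((eventually_all_finset F).2 fun p _ => (h0 p).eventually (gt_mem_nhds hη)).exists
  have hbound : ∀ x, g i x ≤ (ε + η) + Tᶜ.indicator (1 : X → ℝ) x := fun x => by
    by_cases hx : x ∈ T
    · obtain ⟨p, hp, hxp⟩ := mem_iUnion₂.1 hx
      have hxp : d x p < ε := hxp
      have : (0 : ℝ) ≤ Tᶜ.indicator (1 : X → ℝ) x :=
        indicator_nonneg (fun _ _ => zero_le_one) x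
      linarith [hi p hp, (abs_le.1 ((hg i).2 x p)).2]
    · rw [indicator_of_mem (show x ∈ Tᶜ from hx), Pi.one_apply]
      linarith [(abs_le.1 ((hg i).1 x)).2]
  have hind : Integrable (Tᶜ.indicator (1 : X → ℝ)) m :=
    (integrable_const (1 : ℝ)).indicator hT.compl
  refine ⟨i, ?_⟩
  calc ∫ x, g i x ∂m ≤ ∫ x, ((ε + η) + Tᶜ.indicator (1 : X → ℝ) x) ∂m :=
        integral_mono (integrable_of_mem_Lip hopen (hg i)) ((integrable_const _).add hind) hbound
    _ = (ε + η) * m.real univ + m.real Tᶜ := by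
        rw [integral_add (integrable_const _) hind, integral_const, integral_indicator_one hT.compl,
          smul_eq_mul, mul_comm]
    _ ≤ (ε + η) * m.real univ + η := by
        linarith [ENNReal.toReal_lt_of_lt_ofReal hF, measureReal_def m Tᶜ]

end Net

/-- on a uniform D-space, for a nonincreasing nonnegative net in `Lip d`
tending pointwise to 0, `limsup_α ∫ g_α dm ≤ ε·m(X)` for every `ε > 0`; in particular
`∫ g_α dm → 0`. -/
theorem dspace_limsup_bound {X : Type u} [UniformSpace X] (hD : IsDSpace X)
    (m : @MeasureTheory.Measure X (cozMS X))
    (hfin : @MeasureTheory.IsFiniteMeasure X (cozMS X) m)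
    (d : X → X → ℝ) (hd : IsPseudometric d)
    (hdu : UniformContinuous fun p : X × X => d p.1 p.2)
    (ι : Type v) [Preorder ι] [IsDirected ι (· ≤ ·)] [Nonempty ι]
    (g : ι → X → ℝ) (hg : ∀ i, g i ∈ Lip d) (hpos : ∀ i x, 0 ≤ g i x)
    (hmono : ∀ i j, i ≤ j → ∀ x, g j x ≤ g i x)
    (h0 : ∀ x, Tendsto (fun i => g i x) atTop (𝓝 0)) :
    (∀ ε : ℝ, 0 < ε →
      Filter.limsup (fun i => ∫ x, g i x ∂m) atTop ≤ ε * (m Set.univ).toReal) ∧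
    Tendsto (fun i => ∫ x, g i x ∂m) atTop (𝓝 0) := by
  let _ := cozMS X
  have hopen : ∀ U, DOpen d U → MeasurableSet U := fun U hU => hU.measurableSet_cozMS hd hdu
  have hanti : Antitone fun i => ∫ x, g i x ∂m := fun i j hij =>
    integral_mono (integrable_of_mem_Lip hopen (hg j)) (integrable_of_mem_Lip hopen (hg i))
      (hmono i j hij)
  have hlim : Tendsto (fun i => ∫ x, g i x ∂m) atTop (𝓝 0) := by
    refine tendsto_order.2 ⟨fun a ha => .of_forall fun i =>
      ha.trans_le (integral_nonneg (hpos i)), fun b hb => ?_⟩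
    set c := m.real univ
    set η := b / (2 * c + 2)
    have hη : 0 < η := by positivity
    have hsmall : (η + η) * c + η < b := by
      have : η * (2 * c + 2) = b := div_mul_cancel₀ _ (by positivity)
      nlinarith
    obtain ⟨D, hDc, hnear⟩ := hD.exists_countable_ae_near hd hdu hopen m hη
    obtain ⟨i, hi⟩ := exists_integral_le_of_ae_near hd hopen hDc hη.le hnear hg h0 hη
    exact (eventually_ge_atTop i).mono fun j hij => ((hanti hij).trans hi).trans_lt hsmall
  refine ⟨fun ε hε => ?_, hlim⟩
  rw [hlim.limsup_eq]
  positivity
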